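/- The function u₀ ↦ ζ(u₀) = θ₁(u₀)θ₂(u₀)(e^{θ₁(u₀)d} - e^{-θ₂(u₀)d})/(r(θ₁(u₀)+θ₂(u₀))e^{θ₁(u₀)d}) satisfies the symmetry ζ(μ - a) = ζ(μ + a) for all a ≥ 0. -/

import Mathlib

/-!
Dividing through by `exp (θ₁ d)` rewrites `ζ` as `θ₁ θ₂ (1 - exp (-(θ₁ + θ₂) d)) / (r (θ₁ + θ₂))`,
which is symmetric in `θ₁, θ₂`; and reflecting `u` about `μ` swaps `θ₁` and `θ₂`.
-/

open Real Set

noncomputable def th1 (μ σ r u : ℝ) : ℝ := (Real.sqrt ((μ - u)^2 + 2*r*σ^2) + (μ - u)) / σ^2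
noncomputable def th2 (μ σ r u : ℝ) : ℝ := (Real.sqrt ((μ - u)^2 + 2*r*σ^2) - (μ - u)) / σ^2

noncomputable def zeta (μ σ r d u : ℝ) : ℝ :=
  th1 μ σ r u * th2 μ σ r u * (Real.exp (th1 μ σ r u * d) - Real.exp (-(th2 μ σ r u) * d)) /
    (r * (th1 μ σ r u + th2 μ σ r u) * Real.exp (th1 μ σ r u * d))

lemma mul_exp_sub_exp_div_eq (r d p q : ℝ) :
    p * q * (exp (p * d) - exp (-q * d)) / (r * (p + q) * exp (p * d)) =
      p * q * (1 - exp (-(p + q) * d)) / (r * (p + q)) := by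
  have hexp : (exp (p * d) - exp (-q * d)) / exp (p * d) = 1 - exp (-(p + q) * d) := by
    rw [sub_div, div_self (exp_ne_zero _), ← exp_sub]
    ring_nf
  rw [← hexp]
  field_simp

lemma zeta_eq_symm_form (μ σ r d u : ℝ) :
    zeta μ σ r d u = th1 μ σ r u * th2 μ σ r u *
      (1 - exp (-(th1 μ σ r u + th2 μ σ r u) * d)) / (r * (th1 μ σ r u + th2 μ σ r u)) :=
  mul_exp_sub_exp_div_eq r d _ _

lemma th1_add_eq_th2_sub (μ σ r a : ℝ) : th1 μ σ r (μ + a) = th2 μ σ r (μ - a) := by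
  simp only [th1, th2]
  ring_nf

lemma th2_add_eq_th1_sub (μ σ r a : ℝ) : th2 μ σ r (μ + a) = th1 μ σ r (μ - a) := by
  simp only [th1, th2]
  ring_nf

theorem stmt19_general (μ σ r d : ℝ) :
    ∀ a : ℝ, 0 ≤ a → zeta μ σ r d (μ - a) = zeta μ σ r d (μ + a) := by
  intro a _
  rw [zeta_eq_symm_form, zeta_eq_symm_form, th1_add_eq_th2_sub, th2_add_eq_th1_sub]
  ring_nf

theorem stmt19 (μ σ r d : ℝ) (hσ : 0 < σ) (hr : 0 < r) (hd : 0 < d) :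
    ∀ a : ℝ, 0 ≤ a → zeta μ σ r d (μ - a) = zeta μ σ r d (μ + a) :=
  stmt19_general μ σ r d
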